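/- Let d, k, n ≥ 2 with k ≥ 2, and for i_1,…,i_n ∈ {2,…,k} and j ∈ {0,1,…,n−1} let A_{i_1,…,i_n;j} ⊆ F(ℝ^d,k)^n be the set of n-tuples (C_1,…,C_n) with c̄p(C_s) = i_s for s = 1,…,n and such that exactly j of the vectors e_{C_1},…,e_{C_n} equal −e_{C_1}. Then the closure of A_{i_1,…,i_n;j} in F(ℝ^d,k)^n is contained in the union of the sets A_{r_1,…,r_n;s} over all r_1 ≤ i_1, …, r_n ≤ i_n and s ≥ j. -/

import Mathlib

/-!
The projected points p_C(x_i) and the vector e_C depend continuously on C ∈ F(ℝ^d,k). Points that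
are distinct stay distinct nearby, so c̄p can only drop when passing to a limit; and the condition
e_{C_s} = -e_{C_1} is closed, so near a limit tuple the indices satisfying it form a subset of those
satisfying it at the limit.
-/

open unitInterval

noncomputable section

/-- Euclidean space ℝ^d. -/
abbrev E (d : ℕ) : Type := EuclideanSpace ℝ (Fin d)

/-- The ordered configuration space F(ℝ^d, k) of k distinct points in ℝ^d,
viewed as the subspace of (ℝ^d)^k of injective tuples. -/
def Conf (d k : ℕ) : Set (Fin k → E d) := {x | Function.Injective x}

/-- The time i/(n-1) ∈ [0,1] at which the i-th configuration is visited. -/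
def eTime (n : ℕ) (i : Fin n) : unitInterval :=
  Set.projIcc 0 1 zero_le_one ((i : ℝ) / ((n : ℝ) - 1))

/-- The evaluation map e_n : P(X) → X^n,
e_n(γ) = (γ(0), γ(1/(n-1)), …, γ((n-2)/(n-1)), γ(1)). -/
def evalMap {X : Type*} [TopologicalSpace X] (n : ℕ) (γ : C(unitInterval, X)) : Fin n → X :=
  fun i => γ (eTime n i)

/-- `A ⊆ X^n` admits a continuous section of the evaluation map e_n. -/
def HasSec {X : Type*} [TopologicalSpace X] (n : ℕ) (A : Set (Fin n → X)) : Prop :=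
  ∃ s : A → C(unitInterval, X), Continuous s ∧ ∀ a : A, evalMap n (s a) = (a : Fin n → X)

/-- The orienting unit vector e_C = (x_2 - x_1)/|x_2 - x_1| of the line L_C
through x_1 and x_2. -/
def eV {d k : ℕ} (hk : 2 ≤ k) (C : Fin k → E d) : E d :=
  ‖C ⟨1, by omega⟩ - C ⟨0, by omega⟩‖⁻¹ • (C ⟨1, by omega⟩ - C ⟨0, by omega⟩)

/-- The orthogonal projection p_C : ℝ^d → L_C onto the affine line L_C
through x_1 and x_2. -/
def pC {d k : ℕ} (hk : 2 ≤ k) (C : Fin k → E d) (x : E d) : E d :=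
  C ⟨0, by omega⟩ + (inner ℝ (x - C ⟨0, by omega⟩) (eV hk C) : ℝ) • eV hk C

/-- c̄p(C) = cardinality of {p_C(x_1),…,p_C(x_k)}. -/
def cpBar {d k : ℕ} (hk : 2 ≤ k) (C : Fin k → E d) : ℕ :=
  (Set.range fun i => pC hk C (C i)).ncard

/-- The set A_{i_1,…,i_n;j} of n-tuples (C_1,…,C_n) ∈ F(ℝ^d,k)^n with
c̄p(C_s) = i_s for all s and exactly j of the vectors e_{C_1},…,e_{C_n} equal
-e_{C_1}. -/
def Atup (d k n : ℕ) (hk : 2 ≤ k) (hn : 2 ≤ n) (iv : Fin n → ℕ) (j : ℕ) :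
    Set (Fin n → ↥(Conf d k)) :=
  {C | (∀ s : Fin n, cpBar hk ((C s : Fin k → E d)) = iv s) ∧
    {s : Fin n | eV hk ((C s : Fin k → E d)) =
      -eV hk ((C ⟨0, by omega⟩ : Fin k → E d))}.ncard = j}

open Set Filter Topology

section DistinctValues

variable {ι X Y : Type*}

lemma Set.ncard_range_le_ncard_range_of_ne_imp_ne [Finite ι] {g g' : ι → Y}
    (h : ∀ i j, g i ≠ g j → g' i ≠ g' j) : (range g).ncard ≤ (range g').ncard := by
  cases isEmpty_or_nonempty ι
  · simp [range_eq_empty]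
  · have hfactor : range g ⊆ (g ∘ Function.invFun g') '' range g' := by
      rintro _ ⟨i, rfl⟩
      refine ⟨g' i, mem_range_self i, ?_⟩
      by_contra hne
      exact h _ _ hne (Function.invFun_eq ⟨i, rfl⟩)
    exact (ncard_le_ncard hfactor (toFinite _)).trans (ncard_image_le (toFinite _))

variable [TopologicalSpace X] [TopologicalSpace Y] [T2Space Y] [Finite ι]

lemma ContinuousAt.eventually_ncard_range_le {f : X → ι → Y} {x : X} (hf : ContinuousAt f x) :
    ∀ᶠ x' in 𝓝 x, (range (f x)).ncard ≤ (range (f x')).ncard := by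
  have hcoord : ∀ i, ContinuousAt (f · i) x := continuousAt_pi.mp hf
  have hdistinct : ∀ᶠ x' in 𝓝 x, ∀ i j, f x i ≠ f x j → f x' i ≠ f x' j := by
    refine eventually_all.2 fun i => eventually_all.2 fun j => ?_
    by_cases hij : f x i = f x j
    · exact Eventually.of_forall fun _ hne => absurd hij hne
    · filter_upwards [((hcoord i).ne_iff_eventually_ne (hcoord j)).1 hij] with x' hx' _ using hx'
  filter_upwards [hdistinct] with x' hx'
  exact Set.ncard_range_le_ncard_range_of_ne_imp_ne hx'

lemma ContinuousAt.eventually_setOf_eq_subset {u v : X → ι → Y} {x : X}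
    (hu : ContinuousAt u x) (hv : ContinuousAt v x) :
    ∀ᶠ x' in 𝓝 x, {i | u x' i = v x' i} ⊆ {i | u x i = v x i} := by
  have hne : ∀ i, u x i ≠ v x i → ∀ᶠ x' in 𝓝 x, u x' i ≠ v x' i := fun i =>
    ((continuousAt_pi.mp hu i).ne_iff_eventually_ne (continuousAt_pi.mp hv i)).1
  have hclosed : ∀ᶠ x' in 𝓝 x, ∀ i, u x' i = v x' i → u x i = v x i := by
    refine eventually_all.2 fun i => ?_
    by_cases hi : u x i = v x i
    · exact Eventually.of_forall fun _ _ => hi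
    · filter_upwards [hne i hi] with x' hx' heq using absurd heq hx'
  filter_upwards [hclosed] with x' hx' i using hx' i

end DistinctValues

section Configurations

variable {d k : ℕ}

lemma continuous_conf_apply (i : Fin k) : Continuous fun c : Conf d k => (c : Fin k → E d) i :=
  (continuous_apply i).comp continuous_subtype_val

variable (hk : 2 ≤ k)

lemma continuous_eV_conf : Continuous fun c : Conf d k => eV hk (c : Fin k → E d) := by
  have hdiff := (continuous_conf_apply (d := d) ⟨1, hk⟩).sub (continuous_conf_apply ⟨0, by omega⟩)
  refine (hdiff.norm.inv₀ fun c => ?_).smul hdiff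
  exact norm_ne_zero_iff.2 (sub_ne_zero.2 fun h => by simpa using c.2 h)

lemma continuous_pC_conf (i : Fin k) :
    Continuous fun c : Conf d k => pC hk c ((c : Fin k → E d) i) := by
  have h0 := continuous_conf_apply (d := d) (k := k) ⟨0, by omega⟩
  have he := continuous_eV_conf (d := d) hk
  exact h0.add ((((continuous_conf_apply i).sub h0).inner (𝕜 := ℝ) he).smul he)

lemma eventually_cpBar_le {n : ℕ} (C : Fin n → Conf d k) :
    ∀ᶠ C' in 𝓝 C, ∀ s, cpBar hk (C s : Fin k → E d) ≤ cpBar hk (C' s : Fin k → E d) := by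
  refine eventually_all.2 fun s => ?_
  have hproj : Continuous fun (C' : Fin n → Conf d k) (i : Fin k) =>
      pC hk (C' s) ((C' s : Fin k → E d) i) :=
    continuous_pi fun i => (continuous_pC_conf hk i).comp (continuous_apply s)
  exact hproj.continuousAt.eventually_ncard_range_le

lemma eventually_antipodal_subset {n : ℕ} (hn : 2 ≤ n) (C : Fin n → Conf d k) :
    ∀ᶠ C' in 𝓝 C,
      {s | eV hk (C' s : Fin k → E d) = -eV hk (C' ⟨0, by omega⟩ : Fin k → E d)} ⊆
        {s | eV hk (C s : Fin k → E d) = -eV hk (C ⟨0, by omega⟩ : Fin k → E d)} := by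
  have he : ∀ s, Continuous fun C' : Fin n → Conf d k => eV hk (C' s : Fin k → E d) :=
    fun s => (continuous_eV_conf hk).comp (continuous_apply s)
  exact ContinuousAt.eventually_setOf_eq_subset (continuous_pi he).continuousAt
    (continuous_pi fun _ => (he _).neg).continuousAt

end Configurations

theorem stmt17_general (d k n : ℕ) (hk : 2 ≤ k) (hn : 2 ≤ n)
    (iv : Fin n → ℕ) (j : ℕ) :
    closure (Atup d k n hk hn iv j) ⊆
      ⋃ (rv : Fin n → ℕ) (m : ℕ) (_ : (∀ s, rv s ≤ iv s) ∧ j ≤ m),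
        Atup d k n hk hn rv m := by
  intro C hC
  obtain ⟨C', ⟨hcpBar, hantipodal⟩, hC'cpBar, hC'antipodal⟩ := mem_closure_iff_nhds.mp hC _
    ((eventually_cpBar_le hk C).and (eventually_antipodal_subset hk hn C))
  simp only [mem_iUnion]
  exact ⟨_, _, ⟨fun s => (hcpBar s).trans_eq (hC'cpBar s),
    hC'antipodal ▸ ncard_le_ncard hantipodal (toFinite _)⟩, ⟨fun _ => rfl, rfl⟩⟩

/-- For d, k, n ≥ 2, i_1,…,i_n ∈ {2,…,k} and j ∈ {0,…,n-1}, the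
closure of A_{i_1,…,i_n;j} in F(ℝ^d,k)^n is contained in the union of the sets
A_{r_1,…,r_n;s} over all r_1 ≤ i_1, …, r_n ≤ i_n and s ≥ j. -/
theorem stmt17 (d k n : ℕ) (hd : 2 ≤ d) (hk : 2 ≤ k) (hn : 2 ≤ n)
    (iv : Fin n → ℕ) (hiv : ∀ s, 2 ≤ iv s ∧ iv s ≤ k) (j : ℕ) (hj : j ≤ n - 1) :
    closure (Atup d k n hk hn iv j) ⊆
      ⋃ (rv : Fin n → ℕ) (m : ℕ) (_ : (∀ s, rv s ≤ iv s) ∧ j ≤ m),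
        Atup d k n hk hn rv m :=
  stmt17_general d k n hk hn iv j
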